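/- arXiv:math/0411061 — 6 statements merged into one kernel-verified Lean document; each statement's English description precedes it below -/
import Mathlib

section
/- Let R be a commutative ring, λ ∈ R, n ≥ 1, and let (a_{i,j})_{0≤i,j≤n} be elements of R with a_{0,0} = 2. Define the (n+1)×(n+1) matrix A = (A_{i,j})_{0≤i,j≤n} by A_{i,j} = λ·a_{0,j} if i = 0 and j ≠ 0; A_{i,j} = a_{i,j} if j = 0 or if i + j is even; and A_{i,j} = λ·a_{i,0}·a_{0,j} − a_{i,j} otherwise. Define the n×n matrices B = (B_{i,j})_{1≤i,j≤n} and C = (C_{i,j})_{1≤i,j≤n} by B_{i,j} = λ·a_{i,0}·a_{0,j} − a_{i,j} and C_{i,j} = a_{i,j}. Then det A − (−1)^n · det B − det C = 0. -/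
section DetIdentityHelpers

open Matrix

variable {R : Type*} [CommRing R]

private lemma my_updateRow_comm {m : Type*} [DecidableEq m] {α : Type*}
    (M : Matrix m m α) {i j : m} (hij : i ≠ j) (x y : m → α) :
    (M.updateRow i x).updateRow j y = (M.updateRow j y).updateRow i x := by
  ext k l
  rcases eq_or_ne k i with rfl | hki
  · simp [updateRow_ne hij, updateRow_self]
  · rcases eq_or_ne k j with rfl | hkj
    · simp [updateRow_ne hij.symm, updateRow_self]
    · simp [updateRow_ne hki, updateRow_ne hkj]

private lemma my_det_swap_zero {m : Type*} [DecidableEq m] [Fintype m]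
    (M : Matrix m m R) {i j : m} (hij : i ≠ j) (x y : m → R) :
    ((M.updateRow i x).updateRow j y).det + ((M.updateRow i y).updateRow j x).det = 0 := by
  have h0 : ∀ z : m → R, ((M.updateRow i z).updateRow j z).det = 0 := by
    intro z
    refine det_zero_of_row_eq hij ?_
    rw [updateRow_ne hij, updateRow_self, updateRow_self]
  have h1 : ((M.updateRow i (x + y)).updateRow j (x + y)).det = 0 := h0 _
  rw [det_updateRow_add,
    my_updateRow_comm M hij (x + y) x, my_updateRow_comm M hij (x + y) y,
    det_updateRow_add, det_updateRow_add,
    my_updateRow_comm M hij.symm x x, my_updateRow_comm M hij.symm x y,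
    my_updateRow_comm M hij.symm y x, my_updateRow_comm M hij.symm y y] at h1
  linear_combination h1 - h0 x - h0 y

private lemma my_detK {n : ℕ} (X : Matrix (Fin n) (Fin n) R) (u₁ u₂ w w' : Fin n → R) :
    (X + Matrix.of fun i j => u₁ i * w j + u₂ i * w' j).det
      + (X + Matrix.of fun i j => u₁ i * w' j + u₂ i * w j).det
    = (X + Matrix.of fun i j => (u₁ i + u₂ i) * (w j + w' j)).det + X.det := by
  classical
  set U : Matrix (Fin n) (Fin 2) R := Matrix.of fun i k => if k = 0 then u₁ i else u₂ i with hU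
  set F : (Fin n → R) → (Fin n → R) → Matrix (Fin 2 ⊕ Fin n) (Fin 2 ⊕ Fin n) R :=
    fun w₁ w₂ => fromBlocks 1 (Matrix.of fun k j => if k = (0 : Fin 2) then -w₁ j else -w₂ j) U X
    with hF
  have hFdet : ∀ w₁ w₂ : Fin n → R,
      (F w₁ w₂).det = (X + Matrix.of fun i j => u₁ i * w₁ j + u₂ i * w₂ j).det := by
    intro w₁ w₂
    rw [hF]
    simp only [det_fromBlocks_one₁₁]
    congr 1
    ext i j
    simp only [Matrix.sub_apply, Matrix.add_apply, of_apply, Matrix.mul_apply, Fin.sum_univ_two, hU, of_apply]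
    norm_num
    ring
  set e : Fin 2 → (Fin 2 ⊕ Fin n → R) :=
    fun k => Sum.elim (fun k' => if k = k' then 1 else 0) 0 with he
  set s : (Fin n → R) → (Fin 2 ⊕ Fin n → R) := fun w => Sum.elim 0 (fun j => -w j) with hs
  have hrow : ∀ w₁ w₂ : Fin n → R,
      F w₁ w₂ = ((F 0 0).updateRow (Sum.inl 0) (e 0 + s w₁)).updateRow (Sum.inl 1) (e 1 + s w₂) := by
    intro w₁ w₂
    ext c d
    rcases c with k | i
    · rcases d with k' | j
      all_goals {
        fin_cases k <;>
          simp [hF, he, hs, fromBlocks, updateRow_apply, Matrix.one_apply]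
      }
    · have h1 : (Sum.inr i : Fin 2 ⊕ Fin n) ≠ Sum.inl 0 := by simp
      have h2 : (Sum.inr i : Fin 2 ⊕ Fin n) ≠ Sum.inl 1 := by simp
      rw [updateRow_ne h2, updateRow_ne h1]
      rcases d with k' | j <;> simp [hF, fromBlocks]
  set G := F 0 0 with hG
  set D : (Fin 2 ⊕ Fin n → R) → (Fin 2 ⊕ Fin n → R) → R :=
    fun x y => ((G.updateRow (Sum.inl 0) x).updateRow (Sum.inl 1) y).det with hD
  have hne : (Sum.inl 0 : Fin 2 ⊕ Fin n) ≠ Sum.inl 1 := by simp [Fin.ext_iff]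
  have hDadd2 : ∀ x y y', D x (y + y') = D x y + D x y' := fun x y y' =>
    det_updateRow_add _ _ _ _
  have hDadd1 : ∀ x x' y, D (x + x') y = D x y + D x' y := by
    intro x x' y
    simp only [hD]
    rw [my_updateRow_comm G hne (x + x') y, det_updateRow_add,
      my_updateRow_comm G hne.symm y x, my_updateRow_comm G hne.symm y x']
  have hDdiag : ∀ x, D x x = 0 := by
    intro x
    simp only [hD]
    refine det_zero_of_row_eq hne ?_
    rw [updateRow_ne hne, updateRow_self, updateRow_self]
  have hexp : ∀ w₁ w₂ : Fin n → R,
      (F w₁ w₂).det = D (e 0) (e 1) + D (e 0) (s w₂) + D (s w₁) (e 1) + D (s w₁) (s w₂) := by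
    intro w₁ w₂
    rw [hrow w₁ w₂]
    show D (e 0 + s w₁) (e 1 + s w₂) = _
    rw [hDadd1, hDadd2, hDadd2]
    ring
  have hF00 : (F 0 0).det = X.det := by
    have h0 : (Matrix.of fun i j : Fin n => u₁ i * (0 : Fin n → R) j + u₂ i * (0 : Fin n → R) j)
        = (0 : Matrix (Fin n) (Fin n) R) := by
      ext i j; simp
    rw [hFdet 0 0, h0, add_zero]
  have hG00 : D (e 0) (e 1) = X.det := by
    have h := hrow 0 0
    have hs0 : s 0 = 0 := by
      funext c; rcases c with k | j <;> simp [hs]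
    rw [hs0, add_zero, add_zero] at h
    calc D (e 0) (e 1) = (F 0 0).det := by simp only [hD]; rw [← h]
      _ = X.det := hF00
  have hs_add : ∀ w₁ w₂, s (w₁ + w₂) = s w₁ + s w₂ := by
    intro w₁ w₂
    funext c
    rcases c with k | j
    · simp [hs]
    · simp only [hs, Sum.elim_inr, Pi.add_apply]
      ring
  rw [← hFdet w w', ← hFdet w' w]
  have h3 : (X + Matrix.of fun i j => (u₁ i + u₂ i) * (w j + w' j)).det
      = (F (w + w') (w + w')).det := by
    rw [hFdet (w + w') (w + w')]
    congr 2
    ext i j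
    simp only [of_apply, Pi.add_apply]
    ring
  rw [h3, hexp w w', hexp w' w, hexp (w + w') (w + w'), hs_add]
  linear_combination hG00 - hDadd2 (e 0) (s w) (s w') - hDadd1 (s w) (s w') (e 1)
    - hDadd1 (s w) (s w') (s w + s w') - hDadd2 (s w) (s w) (s w')
    - hDadd2 (s w') (s w) (s w') - hDdiag (s w) - hDdiag (s w')


private lemma my_det_parity_neg {n : ℕ} (f g : Fin n → Fin n → R) :
    (Matrix.of fun i j : Fin n => if Even ((i : ℕ) + (j : ℕ)) then f i j else g i j).det
      = (Matrix.of fun i j : Fin n => if Even ((i : ℕ) + (j : ℕ)) then f i j else -g i j).det := by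
  have key : (Matrix.of fun i j : Fin n => if Even ((i : ℕ) + (j : ℕ)) then f i j else -g i j)
      = Matrix.of (fun i j : Fin n => (-1 : R) ^ (i : ℕ) *
          ((Matrix.of fun i j : Fin n => (-1 : R) ^ (j : ℕ) *
            (Matrix.of fun i j : Fin n =>
              if Even ((i : ℕ) + (j : ℕ)) then f i j else g i j) i j) i j)) := by
    ext i j
    simp only [of_apply]
    rcases Nat.even_or_odd ((i : ℕ) + (j : ℕ)) with h | h
    · have h2 : (-1 : R) ^ (i : ℕ) * (-1 : R) ^ (j : ℕ) = 1 := by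
        rw [← pow_add]; exact Even.neg_one_pow h
      simp only [if_pos h]
      rw [← mul_assoc, h2, one_mul]
    · have hne := Nat.not_even_iff_odd.mpr h
      have h2 : (-1 : R) ^ (i : ℕ) * (-1 : R) ^ (j : ℕ) = -1 := by
        rw [← pow_add]; exact Odd.neg_one_pow h
      simp only [if_neg hne]
      rw [← mul_assoc, h2]
      ring
  have h1 : ∀ i : Fin n, (-1 : R) ^ (i : ℕ) * (-1 : R) ^ (i : ℕ) = 1 := by
    intro i
    rw [← mul_pow]
    norm_num
  rw [key, det_mul_column, det_mul_row, ← mul_assoc, ← Finset.prod_mul_distrib,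
    Finset.prod_congr rfl fun i _ => h1 i, Finset.prod_const_one, one_mul]

private lemma my_det_minor {n : ℕ} (M : Matrix (Fin (n + 1)) (Fin (n + 1)) R)
    (h : M 0 = Pi.single 0 1) : M.det = (M.submatrix Fin.succ Fin.succ).det := by
  rw [det_succ_row_zero, Finset.sum_eq_single 0]
  · rw [h]
    simp [Fin.succAbove_zero]
  · intro j _ hj
    rw [h]
    simp [Pi.single_eq_of_ne hj]
  · intro h'
    exact absurd (Finset.mem_univ _) h'


end DetIdentityHelpers

open Matrix in
/-- **Theorem 1 of the paper.**
Let `R` be a commutative ring, `l ∈ R`, `n ≥ 1`, and `(a_{i,j})_{0 ≤ i,j ≤ n}` elements of `R`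
with `a_{0,0} = 2`.  With the `(n+1)×(n+1)` matrix `A` and the `n×n` matrices `B`, `C` as in the
statement, `det A - (-1)^n ⬝ det B - det C = 0`.  (Indices `1,…,n` of `B`, `C` are represented by
`Fin n` via `i ↦ i.succ`.) -/
theorem det_identity_magnus_general {R : Type*} [CommRing R] (l : R) (n : ℕ) (hn : 1 ≤ n)
    (a : Fin (n + 1) → Fin (n + 1) → R) (ha : a 0 0 = 2) :
    (Matrix.of fun i j : Fin (n + 1) =>
        if i = 0 ∧ j ≠ 0 then l * a 0 j
        else if j = 0 ∨ Even ((i : ℕ) + (j : ℕ)) then a i j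
        else l * a i 0 * a 0 j - a i j).det
      - (-1 : R) ^ n *
        (Matrix.of fun i j : Fin n =>
          l * a i.succ 0 * a 0 j.succ - a i.succ j.succ).det
      - (Matrix.of fun i j : Fin n => a i.succ j.succ).det = 0 := by
  classical
  set A : Matrix (Fin (n + 1)) (Fin (n + 1)) R := Matrix.of fun i j : Fin (n + 1) =>
      if i = 0 ∧ j ≠ 0 then l * a 0 j
      else if j = 0 ∨ Even ((i : ℕ) + (j : ℕ)) then a i j
      else l * a i 0 * a 0 j - a i j with hAdef
  set r : Fin (n + 1) → R := fun j => if j = 0 then 1 else l * a 0 j with hr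
  have hpar : ∀ i j : Fin n, Even ((i.succ : ℕ) + (j.succ : ℕ)) ↔ Even ((i : ℕ) + (j : ℕ)) := by
    intro i j
    rw [Fin.val_succ, Fin.val_succ, Nat.even_iff, Nat.even_iff]
    omega
  -- Step 1: split row 0
  have h2p : ∀ i j : Fin n, Even (2 + (i : ℕ) + (j : ℕ)) ↔ Even ((i : ℕ) + (j : ℕ)) := by
    intro i j
    rw [Nat.even_iff, Nat.even_iff]
    omega
  have hA : A = A.updateRow 0 (Pi.single 0 1 + r) := by
    ext i j
    rcases eq_or_ne i 0 with rfl | hi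
    · rw [updateRow_self]
      rcases eq_or_ne j 0 with rfl | hj
      · simp [hAdef, hr, ha]
        norm_num
      · simp [hAdef, hr, hj, Pi.single_eq_of_ne hj]
    · rw [updateRow_ne hi]
  have h_split : A.det = (A.updateRow 0 (Pi.single 0 1)).det + (A.updateRow 0 r).det := by
    rw [← det_updateRow_add, ← hA]
  -- Step 3: first minor
  set Mmat : Matrix (Fin n) (Fin n) R := Matrix.of fun i j : Fin n =>
      if Even ((i : ℕ) + (j : ℕ)) then a i.succ j.succ
      else l * a i.succ 0 * a 0 j.succ - a i.succ j.succ with hMdef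
  have h1 : (A.updateRow 0 (Pi.single 0 1)).det = Mmat.det := by
    rw [my_det_minor _ (updateRow_self)]
    congr 1
    ext i j
    rw [submatrix_apply, updateRow_ne (Fin.succ_ne_zero i)]
    simp only [hAdef, hMdef, of_apply]
    rw [if_neg (by simp [Fin.succ_ne_zero i]), if_congr (or_iff_right (Fin.succ_ne_zero j)) rfl rfl,
      if_congr (hpar i j) rfl rfl]
  -- Step 4: second minor via column operations
  set E : Matrix (Fin (n + 1)) (Fin (n + 1)) R := Matrix.of fun k j : Fin (n + 1) =>
      if k = 0 ∧ j ≠ 0 then -(l * a 0 j) else 0 with hEdef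
  set Nmat : Matrix (Fin n) (Fin n) R := Matrix.of fun i j : Fin n =>
      if Even ((i : ℕ) + (j : ℕ)) then a i.succ j.succ - l * a i.succ 0 * a 0 j.succ
      else -(a i.succ j.succ) with hNdef
  have hUtri : ((1 : Matrix (Fin (n + 1)) (Fin (n + 1)) R) + E).BlockTriangular id := by
    intro i j hij
    have hji : (j : Fin (n + 1)) < i := hij
    have hine : i ≠ j := (ne_of_lt hji).symm
    have hi0 : i ≠ 0 :=
      Fin.pos_iff_ne_zero.mp (lt_of_le_of_lt (Fin.zero_le j) hji)
    simp [hEdef, one_apply_ne hine, hi0]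
  have hUdet : ((1 : Matrix (Fin (n + 1)) (Fin (n + 1)) R) + E).det = 1 := by
    rw [det_of_upperTriangular hUtri]
    refine Finset.prod_eq_one fun i _ => ?_
    simp [hEdef]
  have hME : ∀ (M : Matrix (Fin (n + 1)) (Fin (n + 1)) R) (i j : Fin (n + 1)),
      (M * E) i j = M i 0 * E 0 j := by
    intro M i j
    rw [mul_apply]
    refine Finset.sum_eq_single 0 (fun k _ hk => ?_) (fun h => absurd (Finset.mem_univ _) h)
    simp [hEdef, hk]
  have h2 : (A.updateRow 0 r).det = Nmat.det := by
    have hdet2 : (A.updateRow 0 r).det = ((A.updateRow 0 r) * (1 + E)).det := by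
      rw [det_mul, hUdet, mul_one]
    rw [hdet2, mul_add, mul_one]
    have hrow0 : (A.updateRow 0 r + A.updateRow 0 r * E) 0 = Pi.single 0 1 := by
      funext j
      rcases eq_or_ne j 0 with rfl | hj
      · simp only [Matrix.add_apply, hME]; simp [hEdef, hr]
      · simp only [Matrix.add_apply, updateRow_self, hME, updateRow_self]
        simp [hEdef, hj, hr, Pi.single_eq_of_ne hj]
    rw [my_det_minor _ hrow0]
    congr 1
    ext i j
    rw [submatrix_apply, Matrix.add_apply, updateRow_ne (Fin.succ_ne_zero i), hME,
      updateRow_ne (Fin.succ_ne_zero i)]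
    have hA0 : A i.succ 0 = a i.succ 0 := by
      simp [hAdef]
    have hE0 : E 0 j.succ = -(l * a 0 j.succ) := by
      simp [hEdef, Fin.succ_ne_zero]
    have hAij : A i.succ j.succ
        = if Even ((i : ℕ) + (j : ℕ)) then a i.succ j.succ
          else l * a i.succ 0 * a 0 j.succ - a i.succ j.succ := by
      simp only [hAdef, of_apply]
      rw [if_neg (show ¬(i.succ = 0 ∧ j.succ ≠ 0) from fun hc => Fin.succ_ne_zero i hc.1),
        if_congr (or_iff_right (Fin.succ_ne_zero j)) rfl rfl,
        if_congr (hpar i j) rfl rfl]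
    rw [hAij, hA0, hE0]
    simp only [hNdef, of_apply]
    by_cases h : Even ((i : ℕ) + (j : ℕ))
    · rw [if_pos h, if_pos h]
      ring
    · rw [if_neg h, if_neg h]
      ring
  -- Step 5: sign conjugation
  set M' : Matrix (Fin n) (Fin n) R := Matrix.of fun i j : Fin n =>
      if Even ((i : ℕ) + (j : ℕ)) then a i.succ j.succ
      else a i.succ j.succ - l * a i.succ 0 * a 0 j.succ with hM'def
  set N' : Matrix (Fin n) (Fin n) R := Matrix.of fun i j : Fin n =>
      if Even ((i : ℕ) + (j : ℕ)) then a i.succ j.succ - l * a i.succ 0 * a 0 j.succ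
      else a i.succ j.succ with hN'def
  have hM : Mmat.det = M'.det := by
    rw [hMdef, my_det_parity_neg]
    congr 1
    ext i j
    simp only [hM'def, of_apply]
    by_cases h : Even ((i : ℕ) + (j : ℕ))
    · rw [if_pos h, if_pos h]
    · rw [if_neg h, if_neg h, neg_sub]
  have hN : Nmat.det = N'.det := by
    rw [hNdef, my_det_parity_neg]
    congr 1
    ext i j
    simp only [hN'def, of_apply]
    by_cases h : Even ((i : ℕ) + (j : ℕ))
    · rw [if_pos h, if_pos h]
    · rw [if_neg h, if_neg h, neg_neg]
  -- Step 6: the key rank-two identity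
  set Cmat : Matrix (Fin n) (Fin n) R := Matrix.of fun i j : Fin n => a i.succ j.succ with hCdef
  set Qmat : Matrix (Fin n) (Fin n) R := Matrix.of fun i j : Fin n =>
      a i.succ j.succ - l * a i.succ 0 * a 0 j.succ with hQdef
  set u₁ : Fin n → R := fun i => if Even (i : ℕ) then -(l * a i.succ 0) else 0 with hu₁
  set u₂ : Fin n → R := fun i => if Even (i : ℕ) then 0 else -(l * a i.succ 0) with hu₂
  set w : Fin n → R := fun j => if Even (j : ℕ) then 0 else a 0 j.succ with hw
  set w' : Fin n → R := fun j => if Even (j : ℕ) then a 0 j.succ else 0 with hw'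
  have hKM : Cmat + (Matrix.of fun i j => u₁ i * w j + u₂ i * w' j) = M' := by
    ext i j
    simp only [Matrix.add_apply, of_apply, hCdef, hM'def, hu₁, hu₂, hw, hw']
    by_cases hi : Even ((i : ℕ)) <;> by_cases hj : Even ((j : ℕ)) <;>
      simp [Nat.even_add, hi, hj] <;> ring
  have hKN : Cmat + (Matrix.of fun i j => u₁ i * w' j + u₂ i * w j) = N' := by
    ext i j
    simp only [Matrix.add_apply, of_apply, hCdef, hN'def, hu₁, hu₂, hw, hw']
    by_cases hi : Even ((i : ℕ)) <;> by_cases hj : Even ((j : ℕ)) <;>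
      simp [Nat.even_add, hi, hj] <;> ring
  have hKQ : Cmat + (Matrix.of fun i j => (u₁ i + u₂ i) * (w j + w' j)) = Qmat := by
    ext i j
    simp only [Matrix.add_apply, of_apply, hCdef, hQdef, hu₁, hu₂, hw, hw']
    by_cases hi : Even ((i : ℕ)) <;> by_cases hj : Even ((j : ℕ)) <;>
      simp [hi, hj] <;> ring
  have hK : M'.det + N'.det = Qmat.det + Cmat.det := by
    rw [← hKM, ← hKN, ← hKQ]
    exact my_detK Cmat u₁ u₂ w w'
  -- Step 7: B = -Q
  have hBQ : (-1 : R) ^ n * (Matrix.of fun i j : Fin n =>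
      l * a i.succ 0 * a 0 j.succ - a i.succ j.succ).det = Qmat.det := by
    have hBneg : (Matrix.of fun i j : Fin n =>
        l * a i.succ 0 * a 0 j.succ - a i.succ j.succ) = -Qmat := by
      ext i j
      simp only [of_apply, Matrix.neg_apply, hQdef]
      ring
    rw [hBneg, det_neg, Fintype.card_fin, ← mul_assoc, ← mul_pow]
    norm_num
  linear_combination h_split + h1 + h2 + hM + hN + hK - hBQ
end

section
/- Let n ≥ 5, let m_1, …, m_n, M_1, …, M_n ∈ SL(2,ℂ), and let ε_1, …, ε_n ∈ {+1, −1}. Define the n×n matrix D = (D_{i,j})_{1≤i,j≤n} by D_{i,j} = tr(m_i · M_j^{ε_i}), where M_j^{ε_i} means M_j if ε_i = +1 and M_j⁻¹ if ε_i = −1. Then det D = 0. -/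
/-!
For `y` of determinant `1` one has `y⁻¹ = adj y`, and for `2×2` matrices
`tr (x · adj y) = tr x · tr y - tr (x y) = tr (adj x · y)`. Hence
`D_{i,j} = tr (a_i M_j)` with `a_i = m_i` or `a_i = adj m_i`, so `D` factors through the
`4`-dimensional space of `2×2` matrices and is singular as soon as `n > 4`.
-/

/-- The trace of a `2×2` matrix in `SL(2,ℂ)`. -/
noncomputable def tr2 (x : Matrix.SpecialLinearGroup (Fin 2) ℂ) : ℂ :=
  Matrix.trace (x : Matrix (Fin 2) (Fin 2) ℂ)

namespace Matrix

theorem det_mul_eq_zero_of_card_lt {R ι κ : Type*} [CommRing R] [IsDomain R]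
    [Fintype ι] [DecidableEq ι] [Fintype κ] (A : Matrix ι κ R) (B : Matrix κ ι R)
    (h : Fintype.card κ < Fintype.card ι) : (A * B).det = 0 := by
  by_contra hdet
  have hrank : (A * B).rank = Fintype.card ι := rank_of_det_ne_zero hdet
  have hle : (A * B).rank ≤ Fintype.card κ := (rank_mul_le_left A B).trans A.rank_le_card_width
  omega

theorem det_of_trace_mul_eq_zero {R ι κ : Type*} [CommRing R] [IsDomain R]
    [Fintype ι] [DecidableEq ι] [Fintype κ] (a b : ι → Matrix κ κ R)
    (h : Fintype.card κ * Fintype.card κ < Fintype.card ι) :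
    (of fun i j => trace (a i * b j)).det = 0 := by
  have hfactor : (of fun i j => trace (a i * b j)) =
      (of fun i (p : κ × κ) => a i p.1 p.2 : Matrix ι (κ × κ) R) *
        (of fun p j => b j p.2 p.1 : Matrix (κ × κ) ι R) := by
    ext i j
    simp only [of_apply, Matrix.mul_apply, Fintype.sum_prod_type, trace, diag]
  rw [hfactor]
  exact det_mul_eq_zero_of_card_lt _ _ (by simpa using h)

theorem adjugate_fin_two_eq_trace_smul_one_sub {R : Type*} [CommRing R]
    (A : Matrix (Fin 2) (Fin 2) R) : adjugate A = trace A • (1 : Matrix (Fin 2) (Fin 2) R) - A := by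
  rw [adjugate_fin_two]
  ext i j
  fin_cases i <;> fin_cases j <;> simp [trace_fin_two]

theorem trace_mul_adjugate_fin_two {R : Type*} [CommRing R] (A B : Matrix (Fin 2) (Fin 2) R) :
    trace (A * adjugate B) = trace (adjugate A * B) := by
  simp only [adjugate_fin_two_eq_trace_smul_one_sub, Matrix.mul_sub, Matrix.sub_mul,
    Matrix.mul_smul, Matrix.smul_mul, Matrix.mul_one, Matrix.one_mul, trace_sub, trace_smul,
    smul_eq_mul, trace_mul_comm A B]
  ring

theorem SpecialLinearGroup.exists_trace_mul_zpow_eq {R : Type*} [CommRing R]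
    (x : SpecialLinearGroup (Fin 2) R) {e : ℤ} (he : e = 1 ∨ e = -1) :
    ∃ a : Matrix (Fin 2) (Fin 2) R, ∀ y : SpecialLinearGroup (Fin 2) R,
      trace ((x * y ^ e : SpecialLinearGroup (Fin 2) R) : Matrix (Fin 2) (Fin 2) R) =
        trace (a * (y : Matrix (Fin 2) (Fin 2) R)) := by
  rcases he with rfl | rfl
  · exact ⟨x, fun y => by rw [zpow_one, Matrix.SpecialLinearGroup.coe_mul]⟩
  · refine ⟨adjugate x, fun y => ?_⟩
    rw [_root_.zpow_neg_one, Matrix.SpecialLinearGroup.coe_mul,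
      Matrix.SpecialLinearGroup.coe_inv, trace_mul_adjugate_fin_two]

end Matrix

/-- **Theorem 2 of the paper.**  Let `n ≥ 5`, `m_1,…,m_n, M_1,…,M_n ∈ SL(2,ℂ)` and
`ε_1,…,ε_n ∈ {±1}`.  The `n×n` matrix `D` with `D_{i,j} = tr(m_i M_j^{ε_i})` has
vanishing determinant. -/
theorem det_trace_matrix_eq_zero (n : ℕ) (hn : 5 ≤ n)
    (m M : Fin n → Matrix.SpecialLinearGroup (Fin 2) ℂ)
    (ε : Fin n → ℤ) (hε : ∀ i, ε i = 1 ∨ ε i = -1) :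
    (Matrix.of fun i j : Fin n => tr2 (m i * (M j) ^ (ε i))).det = 0 := by
  choose a ha using fun i => Matrix.SpecialLinearGroup.exists_trace_mul_zpow_eq (m i) (hε i)
  have hD : (Matrix.of fun i j : Fin n => tr2 (m i * (M j) ^ (ε i))) =
      Matrix.of fun i j => Matrix.trace (a i * (M j : Matrix (Fin 2) (Fin 2) ℂ)) := by
    ext i j
    exact ha i (M j)
  rw [hD]
  exact Matrix.det_of_trace_mul_eq_zero _ _ (by simp only [Fintype.card_fin]; omega)
end

section
/- Let n ≥ 4, let m_1, …, m_n, M_1, …, M_n ∈ SL(2,ℂ), and set m_0 = M_0 = I_2, the 2×2 identity matrix. Define the (n+1)×(n+1) complex matrix A = (A_{i,j})_{0≤i,j≤n} by A_{i,j} = tr(m_i · M_j⁻¹) if i + j is even and A_{i,j} = tr(m_i · M_j) otherwise. Then det A = 0. -/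
private lemma sl2_inv_coe (y : Matrix.SpecialLinearGroup (Fin 2) ℂ) :
    ((y⁻¹ : Matrix.SpecialLinearGroup (Fin 2) ℂ) : Matrix (Fin 2) (Fin 2) ℂ) =
      Matrix.of ![![(y : Matrix (Fin 2) (Fin 2) ℂ) 1 1, -(y : Matrix (Fin 2) (Fin 2) ℂ) 0 1],
        ![-(y : Matrix (Fin 2) (Fin 2) ℂ) 1 0, (y : Matrix (Fin 2) (Fin 2) ℂ) 0 0]] := by
  rw [Matrix.SpecialLinearGroup.coe_inv, Matrix.adjugate_fin_two]

/-- **Generalised Magnus Main Lemma, vanishing of `det A`.**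
Let `n ≥ 4`, `m_0,…,m_n, M_0,…,M_n ∈ SL(2,ℂ)` with `m_0 = M_0 = I₂`.  With
`A_{i,j} = tr(m_i M_j⁻¹)` if `i + j` is even and `A_{i,j} = tr(m_i M_j)` otherwise
(`0 ≤ i,j ≤ n`), one has `det A = 0`. -/
theorem det_A_eq_zero (n : ℕ) (hn : 4 ≤ n)
    (m M : Fin (n + 1) → Matrix.SpecialLinearGroup (Fin 2) ℂ)
    (hm : m 0 = 1) (hM : M 0 = 1) :
    (Matrix.of fun i j : Fin (n + 1) =>
        if Even ((i : ℕ) + (j : ℕ)) then tr2 (m i * (M j)⁻¹) else tr2 (m i * M j)).det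
      = 0 := by
  set B : Matrix (Fin (n + 1)) (Fin 2 × Fin 2) ℂ := fun i p =>
    (if Odd (i : ℕ) then (if p.1 = p.2 then tr2 (m i) else 0) else 0) +
      (if Even (i : ℕ) then 1 else -1) * ((m i : Matrix (Fin 2) (Fin 2) ℂ) p.2 p.1) with hB
  set C : Matrix (Fin 2 × Fin 2) (Fin (n + 1)) ℂ := fun p j =>
    if Even (j : ℕ) then (((M j)⁻¹ : Matrix.SpecialLinearGroup (Fin 2) ℂ) :
        Matrix (Fin 2) (Fin 2) ℂ) p.1 p.2
      else ((M j : Matrix (Fin 2) (Fin 2) ℂ)) p.1 p.2 with hC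
  have hA : (Matrix.of fun i j : Fin (n + 1) =>
        if Even ((i : ℕ) + (j : ℕ)) then tr2 (m i * (M j)⁻¹) else tr2 (m i * M j)) = B * C := by
    ext i j
    rcases Nat.even_or_odd (i : ℕ) with hi | hi <;> rcases Nat.even_or_odd (j : ℕ) with hj | hj <;>
      [ (have hi' : ¬ Odd (i:ℕ) := Nat.not_odd_iff_even.2 hi;
         have hj' : ¬ Odd (j:ℕ) := Nat.not_odd_iff_even.2 hj);
        (have hi' : ¬ Odd (i:ℕ) := Nat.not_odd_iff_even.2 hi;
         have hj' : ¬ Even (j:ℕ) := Nat.not_even_iff_odd.2 hj);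
        (have hi' : ¬ Even (i:ℕ) := Nat.not_even_iff_odd.2 hi;
         have hj' : ¬ Odd (j:ℕ) := Nat.not_odd_iff_even.2 hj);
        (have hi' : ¬ Even (i:ℕ) := Nat.not_even_iff_odd.2 hi;
         have hj' : ¬ Even (j:ℕ) := Nat.not_even_iff_odd.2 hj)]
    case inl.inl =>
      rw [Matrix.mul_apply]
      simp only [Matrix.mul_apply, hB, hC, Matrix.of_apply, Nat.even_add, hi, hj, hi', hj',
        tr2, Matrix.SpecialLinearGroup.coe_mul, sl2_inv_coe,
        Matrix.trace_fin_two, Fintype.sum_prod_type, Fin.sum_univ_two]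
      simp [hi, hj, hi', hj']; ring
    case inl.inr =>
      rw [Matrix.mul_apply]
      simp only [Matrix.mul_apply, hB, hC, Matrix.of_apply, Nat.even_add, hi, hj, hi', hj',
        tr2, Matrix.SpecialLinearGroup.coe_mul, sl2_inv_coe,
        Matrix.trace_fin_two, Fintype.sum_prod_type, Fin.sum_univ_two]
      simp [hi, hj, hi', hj']; ring
    case inr.inl =>
      rw [Matrix.mul_apply]
      simp only [Matrix.mul_apply, hB, hC, Matrix.of_apply, Nat.even_add, hi, hj, hi', hj',
        tr2, Matrix.SpecialLinearGroup.coe_mul, sl2_inv_coe,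
        Matrix.trace_fin_two, Fintype.sum_prod_type, Fin.sum_univ_two]
      simp [hi, hj, hi', hj']; ring
    case inr.inr =>
      rw [Matrix.mul_apply]
      simp only [Matrix.mul_apply, hB, hC, Matrix.of_apply, Nat.even_add, hi, hj, hi', hj',
        tr2, Matrix.SpecialLinearGroup.coe_mul, sl2_inv_coe,
        Matrix.trace_fin_two, Fintype.sum_prod_type, Fin.sum_univ_two]
      simp [hi, hj, hi', hj']; ring
  rw [hA]
  by_contra h
  have hu : IsUnit (B * C) := (Matrix.isUnit_iff_isUnit_det _).2 (isUnit_iff_ne_zero.2 h)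
  have hr : (B * C).rank = n + 1 := by
    rw [Matrix.rank_of_isUnit _ hu, Fintype.card_fin]
  have h4 : (B * C).rank ≤ 4 := by
    refine (Matrix.rank_mul_le_left B C).trans ?_
    simpa using B.rank_le_card_width
  omega
end

section
/- Let m_1, m_2, m_3, m_4, M_1, M_2, M_3, M_4 ∈ SL(2,ℂ). Then det((tr(m_i · M_j))_{1≤i,j≤4}) + det((tr(m_i · M_j⁻¹))_{1≤i,j≤4}) = 0. -/
/-- **Magnus's first general identity.**  For `m_1,…,m_4, M_1,…,M_4 ∈ SL(2,ℂ)`,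
`det(tr(m_i M_j)) + det(tr(m_i M_j⁻¹)) = 0`. -/
theorem magnus_first_identity (m M : Fin 4 → Matrix.SpecialLinearGroup (Fin 2) ℂ) :
    (Matrix.of fun i j : Fin 4 => tr2 (m i * M j)).det
      + (Matrix.of fun i j : Fin 4 => tr2 (m i * (M j)⁻¹)).det = 0 := by
  classical
  set f : Fin 4 → Fin 2 × Fin 2 := ![(0,0),(0,1),(1,0),(1,1)] with hf
  set P : Matrix (Fin 4) (Fin 4) ℂ :=
    Matrix.of fun i k => (m i : Matrix (Fin 2) (Fin 2) ℂ) (f k).1 (f k).2 with hP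
  set Q : Matrix (Fin 4) (Fin 4) ℂ :=
    Matrix.of fun k j => (M j : Matrix (Fin 2) (Fin 2) ℂ) (f k).2 (f k).1 with hQ
  set Q' : Matrix (Fin 4) (Fin 4) ℂ :=
    Matrix.of fun k j => ((M j)⁻¹ : Matrix (Fin 2) (Fin 2) ℂ) (f k).2 (f k).1 with hQ'
  set J : Matrix (Fin 4) (Fin 4) ℂ := !![0,0,0,1; 0,-1,0,0; 0,0,-1,0; 1,0,0,0] with hJdef
  have hA : (Matrix.of fun i j : Fin 4 => tr2 (m i * M j)) = P * Q := by
    ext i j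
    simp [tr2, Matrix.trace, Matrix.mul_apply, Matrix.diag, Fin.sum_univ_succ, hP, hQ, hf]
    ring
  have hinv : ∀ j, ((M j : Matrix (Fin 2) (Fin 2) ℂ))⁻¹
      = (M j : Matrix (Fin 2) (Fin 2) ℂ).adjugate := by
    intro j
    rw [Matrix.inv_def, Matrix.SpecialLinearGroup.det_coe]
    simp
  have hB : (Matrix.of fun i j : Fin 4 => tr2 (m i * (M j)⁻¹)) = P * Q' := by
    ext i j
    simp [tr2, Matrix.trace, Matrix.mul_apply, Matrix.diag, Fin.sum_univ_succ, hP, hQ', hf,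
      hinv]
    ring
  have hQJ : Q' = J * Q := by
    ext k j
    fin_cases k <;>
      simp [hQ', hJdef, hQ, Matrix.mul_apply, Fin.sum_univ_succ, hinv,
        Matrix.adjugate_fin_two, hf]
  have hJ : J.det = -1 := by
    simp [hJdef, Matrix.det_succ_row_zero, Fin.sum_univ_succ, Fin.succAbove]
    norm_num
  rw [hA, hB, hQJ, Matrix.det_mul, Matrix.det_mul, Matrix.det_mul, hJ]
  ring
end

section
/- Let m_1, m_2, m_3, m_4, M_1, M_2, M_3, M_4 ∈ SL(2,ℂ). Then det((tr(m_i · m_j))_{1≤i,j≤4}) · det((tr(M_i · M_j))_{1≤i,j≤4}) = (det((tr(m_i · M_j))_{1≤i,j≤4}))². -/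
open Matrix

namespace LinearMap

variable {R M ι : Type*} [CommRing R] [AddCommGroup M] [Module R M]

def gramMatrix (B : M →ₗ[R] M →ₗ[R] R) (v w : ι → M) : Matrix ι ι R :=
  of fun i j => B (v i) (w j)

variable [Fintype ι] [DecidableEq ι]

theorem gramMatrix_eq_transpose_toMatrix_mul_toMatrix₂_mul (B : M →ₗ[R] M →ₗ[R] R)
    (b : Module.Basis ι R M) (v w : ι → M) :
    gramMatrix B v w = (b.toMatrix v)ᵀ * toMatrix₂ b b B * b.toMatrix w := by
  ext i j
  rw [gramMatrix, of_apply, ← b.sum_repr (v i), ← b.sum_repr (w j)]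
  simp only [map_sum, map_smul, LinearMap.sum_apply, LinearMap.smul_apply, smul_eq_mul,
    Matrix.mul_apply, toMatrix₂_apply, Module.Basis.toMatrix_apply, transpose_apply,
    Finset.mul_sum, mul_comm, mul_left_comm]

theorem det_gramMatrix_mul_det_gramMatrix (B : M →ₗ[R] M →ₗ[R] R) (b : Module.Basis ι R M)
    (v w : ι → M) :
    (gramMatrix B v v).det * (gramMatrix B w w).det = (gramMatrix B v w).det ^ 2 := by
  simp only [gramMatrix_eq_transpose_toMatrix_mul_toMatrix₂_mul B b, det_mul, det_transpose]
  ring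

end LinearMap

namespace Matrix

variable (n R : Type*) [Fintype n] [CommRing R]

noncomputable def traceMulForm : Matrix n n R →ₗ[R] Matrix n n R →ₗ[R] R :=
  (LinearMap.mul R (Matrix n n R)).compr₂ (traceLinearMap n R R)

variable {n R}

@[simp]
theorem traceMulForm_apply (A B : Matrix n n R) : traceMulForm n R A B = trace (A * B) := rfl

end Matrix

/-- **Magnus's second general identity.**  For `m_1,…,m_4, M_1,…,M_4 ∈ SL(2,ℂ)`,
`det(tr(m_i m_j)) ⬝ det(tr(M_i M_j)) = (det(tr(m_i M_j)))²`. -/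
theorem magnus_second_identity (m M : Fin 4 → Matrix.SpecialLinearGroup (Fin 2) ℂ) :
    (Matrix.of fun i j : Fin 4 => tr2 (m i * m j)).det
        * (Matrix.of fun i j : Fin 4 => tr2 (M i * M j)).det
      = ((Matrix.of fun i j : Fin 4 => tr2 (m i * M j)).det) ^ 2 := by
  have hrank : Module.finrank ℂ (Matrix (Fin 2) (Fin 2) ℂ) = 4 := by
    simp [Module.finrank_matrix]
  have h := LinearMap.det_gramMatrix_mul_det_gramMatrix (traceMulForm (Fin 2) ℂ)
    (Module.finBasisOfFinrankEq ℂ _ hrank) (fun i => (m i : Matrix (Fin 2) (Fin 2) ℂ))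
    (fun i => (M i : Matrix (Fin 2) (Fin 2) ℂ))
  simpa only [LinearMap.gramMatrix, traceMulForm_apply, tr2,
    Matrix.SpecialLinearGroup.coe_mul] using h
end

section
/- Let R be a commutative ring, λ, β ∈ R, n ≥ 1, and let (a_{i,j})_{1≤i,j≤n} be elements of R with a_{i,1} = β·a_{1,i} for all i > 1. Define the n×n matrix A = (A_{i,j})_{1≤i,j≤n} by A_{i,j} = λ·a_{1,j} if i = 1 and j ≠ 1, and A_{i,j} = a_{i,j} otherwise. Define the (n−1)×(n−1) matrices B = (B_{i,j})_{2≤i,j≤n} and C = (C_{i,j})_{2≤i,j≤n} by B_{i,j} = a_{i,j} − λ·a_{1,i}·a_{1,j} if i + j is even and B_{i,j} = a_{i,j} if i + j is odd, and C_{i,j} = a_{i,j} if i + j is even and C_{i,j} = a_{i,j} − λ·a_{1,i}·a_{1,j} if i + j is odd. Then det A − β·(det B + det C) = (a_{1,1} − 2β) · det((a_{i,j})_{2≤i,j≤n}). -/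
open Matrix Function Finset

namespace Thm3Aux

variable {R : Type*} [CommRing R] {m : ℕ}

lemma aux_zero (f : (Fin m → R) [⋀^Fin m]→ₗ[R] R) (v : Fin m → Fin m → R)
    {i j : Fin m} (hij : i ≠ j) (c d : R) (x : Fin m → R)
    (hi : v i = c • x) (hj : v j = d • x) : f v = 0 := by
  have h1 : v = update (update v j (d • x)) i (c • x) := by
    rw [← hi, ← hj, update_eq_self, update_eq_self]
  rw [h1, f.map_update_smul, Function.update_comm hij.symm, f.map_update_smul]
  rw [f.map_eq_zero_of_eq (i := i) (j := j) _ ?_ hij]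
  · simp
  · rw [Function.update_of_ne hij, Function.update_self, Function.update_self]

lemma aux_pair (f : (Fin m → R) [⋀^Fin m]→ₗ[R] R) (M : Fin m → Fin m → R)
    {i j : Fin m} (hij : i ≠ j) (c d : R) (x y : Fin m → R) :
    f (update (update M j (d • y)) i (c • x))
      + f (update (update M j (d • x)) i (c • y)) = 0 := by
  have key : ∀ z z' : Fin m → R,
      f (update (update M j (d • z)) i (c • z'))
        = (c * d) • f (update (update M j z) i z') := by
    intro z z'
    rw [f.map_update_smul, Function.update_comm hij.symm, f.map_update_smul,
      Function.update_comm hij, smul_smul]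
  have hdiag : ∀ z : Fin m → R, f (update (update M j z) i z) = 0 := by
    intro z
    exact f.map_eq_zero_of_eq _ (by rw [Function.update_self,
      Function.update_of_ne hij.symm, Function.update_self]) hij
  have hexp : f (update (update M j (x + y)) i (x + y)) =
      f (update (update M j x) i x) + f (update (update M j y) i x)
        + (f (update (update M j x) i y) + f (update (update M j y) i y)) := by
    rw [f.map_update_add]
    congr 1 <;>
      rw [Function.update_comm hij.symm, f.map_update_add, Function.update_comm hij,
        Function.update_comm hij]
  have h0 : f (update (update M j y) i x) + f (update (update M j x) i y) = 0 := by
    have h := (hdiag (x + y)).symm.trans hexp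
    rw [hdiag x, hdiag y, zero_add, add_zero] at h
    exact h.symm
  rw [key, key, ← smul_add, h0, smul_zero]

lemma sum_finset_eq (h : Finset (Fin m) → R) (h2 : ∀ s : Finset (Fin m), 2 ≤ s.card → h s = 0) :
    ∑ s : Finset (Fin m), h s = h ∅ + ∑ i : Fin m, h {i} := by
  classical
  rw [← Finset.sum_filter_add_sum_filter_not Finset.univ (fun s => s.card ≤ 1) h]
  have e0 : ∑ s ∈ Finset.univ.filter (fun s : Finset (Fin m) => ¬ s.card ≤ 1), h s = 0 :=
    Finset.sum_eq_zero fun s hs => h2 s (by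
      have := (Finset.mem_filter.mp hs).2; omega)
  rw [e0, add_zero]
  have e1 : Finset.univ.filter (fun s : Finset (Fin m) => s.card ≤ 1)
      = insert ∅ (Finset.univ.image fun i : Fin m => ({i} : Finset (Fin m))) := by
    ext s
    simp only [Finset.mem_filter, Finset.mem_univ, true_and, Finset.mem_insert, Finset.mem_image]
    constructor
    · intro hs
      rcases Nat.lt_or_ge s.card 1 with hlt | hge
      · exact Or.inl (Finset.card_eq_zero.mp (by omega))
      · obtain ⟨i, hi⟩ := Finset.card_eq_one.mp (le_antisymm hs hge)
        exact Or.inr ⟨i, hi.symm⟩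
    · rintro (rfl | ⟨i, rfl⟩) <;> simp
  rw [e1, Finset.sum_insert (by simp),
    Finset.sum_image (fun x _ y _ hxy => Finset.singleton_injective hxy)]

def wE (q : Fin m → R) : Fin m → Fin m → R := fun i j => if Even ((i:ℕ)+(j:ℕ)) then q j else 0
def wO (q : Fin m → R) : Fin m → Fin m → R := fun i j => if Even ((i:ℕ)+(j:ℕ)) then 0 else q j
def gB (l : R) (q : Fin m → R) : Fin m → Fin m → R := fun i => (-(l * q i)) • wE q i
def gC (l : R) (q : Fin m → R) : Fin m → Fin m → R := fun i => (-(l * q i)) • wO q i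

lemma star_lemma (l : R) (M : Matrix (Fin m) (Fin m) R) (q : Fin m → R) :
    (Matrix.of fun i j : Fin m => M i j - if Even ((i:ℕ)+(j:ℕ)) then l * q i * q j else 0).det
      + (Matrix.of fun i j : Fin m => M i j - if Even ((i:ℕ)+(j:ℕ)) then 0 else l * q i * q j).det
      = 2 * M.det - l * ∑ i : Fin m, q i * (M.updateRow i q).det := by
  set f : (Fin m → R) [⋀^Fin m]→ₗ[R] R := Matrix.detRowAlternating with hfdef
  have hB : (Matrix.of fun i j : Fin m => M i j - if Even ((i:ℕ)+(j:ℕ)) then l * q i * q j else 0)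
      = Matrix.of (fun i j => gB l q i j + M i j) := by
    ext i j
    by_cases hp : Even ((i:ℕ)+(j:ℕ)) <;>
      simp [gB, wE, hp, Matrix.of_apply] <;> ring
  have hC : (Matrix.of fun i j : Fin m => M i j - if Even ((i:ℕ)+(j:ℕ)) then 0 else l * q i * q j)
      = Matrix.of (fun i j => gC l q i j + M i j) := by
    ext i j
    by_cases hp : Even ((i:ℕ)+(j:ℕ)) <;>
      simp [gC, wO, hp, Matrix.of_apply] <;> ring
  have key : ∀ g : Fin m → Fin m → R,
      (Matrix.of (fun i j => g i j + M i j)).det = ∑ s : Finset (Fin m), f (s.piecewise g M) := by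
    intro g
    exact f.toMultilinearMap.map_add_univ g M
  have hcard : ∀ s : Finset (Fin m), 2 ≤ s.card →
      f (s.piecewise (gB l q) M) + f (s.piecewise (gC l q) M) = 0 := by
    intro s hs
    by_cases hpar : ∃ i ∈ s, ∃ j ∈ s, i ≠ j ∧ (i:ℕ) % 2 = (j:ℕ) % 2
    · obtain ⟨i, hi, j, hj, hij, hp⟩ := hpar
      have hwE : wE q i = wE (m := m) q j := by
        funext k
        have hiff : Even ((i:ℕ)+(k:ℕ)) ↔ Even ((j:ℕ)+(k:ℕ)) := by
          simp only [Nat.even_add, Nat.even_iff]; omega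
        simp only [wE]; rw [if_congr hiff rfl rfl]
      have hwO : wO q i = wO (m := m) q j := by
        funext k
        have hiff : Even ((i:ℕ)+(k:ℕ)) ↔ Even ((j:ℕ)+(k:ℕ)) := by
          simp only [Nat.even_add, Nat.even_iff]; omega
        simp only [wO]; rw [if_congr hiff rfl rfl]
      rw [aux_zero f _ hij (-(l * q i)) (-(l * q j)) (wE q i)
          (by erw [Finset.piecewise_eq_of_mem _ _ _ hi]; rfl)
          (by erw [Finset.piecewise_eq_of_mem _ _ _ hj]
              show (-(l * q j)) • wE q j = _
              rw [hwE]),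
        aux_zero f _ hij (-(l * q i)) (-(l * q j)) (wO q i)
          (by erw [Finset.piecewise_eq_of_mem _ _ _ hi]; rfl)
          (by erw [Finset.piecewise_eq_of_mem _ _ _ hj]
              show (-(l * q j)) • wO q j = _
              rw [hwO]),
        add_zero]
    · push_neg at hpar
      have hcard2 : s.card = 2 := by
        refine le_antisymm ?_ hs
        by_contra hgt
        push_neg at hgt
        have ht : #({0,1} : Finset ℕ) = 2 := rfl
        have hlt : #({0,1} : Finset ℕ) < #s := by rw [ht]; omega
        obtain ⟨x, hx, y, hy, hxy, hfxy⟩ :=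
          Finset.exists_ne_map_eq_of_card_lt_of_maps_to
            (t := ({0,1} : Finset ℕ)) (f := fun a : Fin m => (a:ℕ) % 2)
            hlt
            (fun a _ => by
              rcases Nat.mod_two_eq_zero_or_one (a:ℕ) with h | h <;> simp [h])
        exact hpar x hx y hy hxy hfxy
      obtain ⟨i, j, hij, rfl⟩ := Finset.card_eq_two.mp hcard2
      have hp : ¬ ((i:ℕ) % 2 = (j:ℕ) % 2) :=
        hpar i (by simp) j (by simp) hij
      have hswap1 : wO q i = wE (m := m) q j := by
        funext k
        have hiff : Even ((i:ℕ)+(k:ℕ)) ↔ ¬ Even ((j:ℕ)+(k:ℕ)) := by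
          simp only [Nat.even_add, Nat.even_iff]; omega
        simp only [wO, wE]
        rw [if_congr hiff rfl rfl, ite_not]
      have hswap2 : wO q j = wE (m := m) q i := by
        funext k
        have hiff : Even ((j:ℕ)+(k:ℕ)) ↔ ¬ Even ((i:ℕ)+(k:ℕ)) := by
          simp only [Nat.even_add, Nat.even_iff]; omega
        simp only [wO, wE]
        rw [if_congr hiff rfl rfl, ite_not]
      have hpw : ∀ g : Fin m → Fin m → R, ({i, j} : Finset (Fin m)).piecewise g M
          = update (update M j (g j)) i (g i) := by
        intro g
        erw [show ({i, j} : Finset (Fin m)) = insert i {j} from rfl, Finset.piecewise_insert,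
          Finset.piecewise_singleton]
      rw [hpw, hpw]
      show f (update (update M j ((-(l * q j)) • wE q j)) i ((-(l * q i)) • wE q i))
          + f (update (update M j ((-(l * q j)) • wO q j)) i ((-(l * q i)) • wO q i)) = 0
      rw [hswap1, hswap2]
      exact aux_pair f M hij (-(l * q i)) (-(l * q j)) (wE q i) (wE q j)
  rw [hB, hC, key (gB l q), key (gC l q), ← Finset.sum_add_distrib,
    sum_finset_eq (fun s => f (s.piecewise (gB l q) M) + f (s.piecewise (gC l q) M)) hcard]
  erw [Finset.piecewise_empty]
  have hsing : ∀ i : Fin m, f (Finset.piecewise {i} (gB l q) M) + f (Finset.piecewise {i} (gC l q) M)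
      = -(l * q i) * (M.updateRow i q).det := by
    intro i
    erw [Finset.piecewise_singleton, Finset.piecewise_singleton]
    show f (update M i ((-(l * q i)) • wE q i)) + f (update M i ((-(l * q i)) • wO q i)) = _
    erw [f.map_update_smul, f.map_update_smul, ← smul_add, ← f.map_update_add]
    have hq : wE q i + wO (m := m) q i = q := by
      funext k
      by_cases hp : Even ((i:ℕ)+(k:ℕ)) <;> simp [wE, wO, hp]
    rw [hq]
    show (-(l * q i)) * f (update M i q) = _
    congr 1
  rw [Finset.sum_congr rfl (fun i _ => hsing i)]
  have hfM : f M = M.det := rfl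
  rw [hfM]
  have hneg : ∑ i : Fin m, -(l * q i) * (M.updateRow i q).det
      = -(l * ∑ i : Fin m, q i * (M.updateRow i q).det) := by
    rw [Finset.mul_sum, ← Finset.sum_neg_distrib]
    exact Finset.sum_congr rfl fun i _ => by ring
  rw [hneg]; ring

lemma detN (b : R) {m : ℕ} (a : Fin (m+1) → Fin (m+1) → R)
    (ha : ∀ i : Fin (m+1), i ≠ 0 → a i 0 = b * a 0 i) (t : Fin m) :
    (Matrix.of fun i k : Fin m => a i.succ ((t.succ).succAbove k)).det
      = (-1:R)^(t:ℕ) * b *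
        ((Matrix.of fun i j : Fin m => a i.succ j.succ).updateCol t (fun i => a 0 i.succ)).det := by
  cases m with
  | zero => exact t.elim0
  | succ m =>
    set N : Matrix (Fin (m+1)) (Fin (m+1)) R :=
      Matrix.of fun i k : Fin (m+1) => a i.succ ((t.succ).succAbove k) with hN
    set M' : Matrix (Fin (m+1)) (Fin (m+1)) R :=
      Matrix.of fun i j : Fin (m+1) => a i.succ j.succ with hM'
    have hval : ∀ (p : Fin (m+2)) (k : Fin (m+1)),
        ((p.succAbove k : Fin (m+2)) : ℕ) = if (k:ℕ) < (p:ℕ) then (k:ℕ) else (k:ℕ)+1 := by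
      intro p k
      simp only [Fin.succAbove, Fin.lt_def, Fin.coe_castSucc]
      split_ifs <;> simp
    have hsub : N.submatrix id ⇑(t.cycleRange) = M'.updateCol t (fun i => b * a 0 i.succ) := by
      ext i k
      rcases lt_trichotomy k t with hlt | heq | hgt
      · have h1 : t.cycleRange k = k + 1 := Fin.cycleRange_of_lt hlt
        have h2 : ((k + 1 : Fin (m+1)) : ℕ) = (k:ℕ) + 1 :=
          Fin.val_add_one_of_lt (lt_of_lt_of_le hlt (Fin.le_last t))
        have h3 : (t.succ).succAbove (k+1) = k.succ := by
          have := hval t.succ (k+1)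
          rw [h2] at this
          rw [Fin.ext_iff, this, if_pos (by simp only [Fin.val_succ]; rw [Fin.lt_def] at hlt; omega), Fin.val_succ]
        rw [Matrix.submatrix_apply, Matrix.updateCol_apply, if_neg hlt.ne, id_eq, h1]
        show a i.succ ((t.succ).succAbove (k+1)) = a i.succ k.succ
        rw [h3]
      · subst heq
        have h1 : k.cycleRange k = 0 := Fin.cycleRange_self k
        have h3 : (k.succ).succAbove 0 = 0 := by
          rw [Fin.ext_iff, hval k.succ 0]
          simp only [Fin.val_zero, Fin.val_succ]
          exact if_pos (by omega)
        rw [Matrix.submatrix_apply, Matrix.updateCol_apply, if_pos rfl, id_eq, h1]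
        show a i.succ ((k.succ).succAbove 0) = b * a 0 i.succ
        rw [h3]
        exact ha i.succ (Fin.succ_ne_zero i)
      · have h1 : t.cycleRange k = k := Fin.cycleRange_of_gt hgt
        have h3 : (t.succ).succAbove k = k.succ := by
          rw [Fin.ext_iff, hval t.succ k, if_neg (by simp only [Fin.val_succ]; rw [Fin.lt_def] at hgt; omega), Fin.val_succ]
        rw [Matrix.submatrix_apply, Matrix.updateCol_apply, if_neg hgt.ne', id_eq, h1]
        show a i.succ ((t.succ).succAbove k) = a i.succ k.succ
        rw [h3]
    have hperm : (N.submatrix id ⇑(t.cycleRange)).det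
        = (-1:R)^(t:ℕ) * N.det := by
      rw [Matrix.det_permute', Fin.sign_cycleRange]
      simp
    have hsmul : (M'.updateCol t (fun i => b * a 0 i.succ)).det
        = b * (M'.updateCol t (fun i => a 0 i.succ)).det := by
      have : (fun i => b * a 0 i.succ) = b • (fun i : Fin (m+1) => a 0 i.succ) := rfl
      rw [this, Matrix.det_updateCol_smul]
    have heq1 : (-1:R)^(t:ℕ) * N.det = b * (M'.updateCol t (fun i => a 0 i.succ)).det := by
      rw [← hperm, hsub, hsmul]
    have hsq : (-1:R)^(t:ℕ) * (-1:R)^(t:ℕ) = 1 := by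
      rw [← pow_add]
      exact Even.neg_one_pow ⟨(t:ℕ), by ring⟩
    calc N.det = ((-1:R)^(t:ℕ) * (-1:R)^(t:ℕ)) * N.det := by rw [hsq, one_mul]
      _ = (-1:R)^(t:ℕ) * ((-1:R)^(t:ℕ) * N.det) := by ring
      _ = (-1:R)^(t:ℕ) * (b * (M'.updateCol t (fun i => a 0 i.succ)).det) := by rw [heq1]
      _ = (-1:R)^(t:ℕ) * b * (M'.updateCol t (fun i => a 0 i.succ)).det := by ring

lemma detA (l b : R) {m : ℕ} (a : Fin (m+1) → Fin (m+1) → R)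
    (ha : ∀ i : Fin (m+1), i ≠ 0 → a i 0 = b * a 0 i) :
    (Matrix.of fun i j : Fin (m+1) => if i = 0 ∧ j ≠ 0 then l * a 0 j else a i j).det
      = a 0 0 * (Matrix.of fun i j : Fin m => a i.succ j.succ).det
        - b * l * ∑ t : Fin m, a 0 t.succ *
            ((Matrix.of fun i j : Fin m => a i.succ j.succ).updateCol t
              (fun i => a 0 i.succ)).det := by
  set A : Matrix (Fin (m+1)) (Fin (m+1)) R :=
    Matrix.of fun i j => if i = 0 ∧ j ≠ 0 then l * a 0 j else a i j with hA
  rw [Matrix.det_succ_row_zero, Fin.sum_univ_succ]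
  have hA00 : A 0 0 = a 0 0 := by simp [hA]
  have hsub0 : A.submatrix Fin.succ ((0 : Fin (m+1)).succAbove)
      = Matrix.of fun i j : Fin m => a i.succ j.succ := by
    ext i j
    simp [hA, Fin.succ_ne_zero, Fin.succAbove_zero]
  have hterm : ∀ t : Fin m, (-1:R)^(((t.succ : Fin (m+1))) : ℕ) * A 0 t.succ *
      (A.submatrix Fin.succ (t.succ).succAbove).det
      = -(b * l * (a 0 t.succ *
          ((Matrix.of fun i j : Fin m => a i.succ j.succ).updateCol t
            (fun i => a 0 i.succ)).det)) := by
    intro t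
    have h1 : A 0 t.succ = l * a 0 t.succ := by simp [hA, Fin.succ_ne_zero]
    have h2 : A.submatrix Fin.succ (t.succ).succAbove
        = Matrix.of fun i k : Fin m => a i.succ ((t.succ).succAbove k) := by
      ext i k; simp [hA, Fin.succ_ne_zero]
    rw [h1, h2, detN b a ha t, Fin.val_succ, pow_succ]
    have hsq : (-1:R)^(t:ℕ) * (-1:R)^(t:ℕ) = 1 := by
      rw [← pow_add]; exact Even.neg_one_pow ⟨(t:ℕ), by ring⟩
    calc (-1:R)^(t:ℕ) * (-1) * (l * a 0 t.succ) *
          ((-1:R)^(t:ℕ) * b * ((Matrix.of fun i j : Fin m => a i.succ j.succ).updateCol t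
            (fun i => a 0 i.succ)).det)
        = ((-1:R)^(t:ℕ) * (-1:R)^(t:ℕ)) * (-(b * l * (a 0 t.succ *
            ((Matrix.of fun i j : Fin m => a i.succ j.succ).updateCol t
              (fun i => a 0 i.succ)).det))) := by ring
      _ = -(b * l * (a 0 t.succ *
            ((Matrix.of fun i j : Fin m => a i.succ j.succ).updateCol t
              (fun i => a 0 i.succ)).det)) := by rw [hsq, one_mul]
  rw [Finset.sum_congr rfl (fun t _ => hterm t), hA00, hsub0,
    Finset.sum_neg_distrib, ← Finset.mul_sum]
  simp only [Fin.val_zero, pow_zero, one_mul]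
  ring

lemma main_aux (l b : R) (m : ℕ) (a : Fin (m+1) → Fin (m+1) → R)
    (ha : ∀ i : Fin (m+1), i ≠ 0 → a i 0 = b * a 0 i) :
    (Matrix.of fun i j : Fin (m+1) => if i = 0 ∧ j ≠ 0 then l * a 0 j else a i j).det
      - b * ((Matrix.of fun i j : Fin m =>
            if Even ((i:ℕ)+(j:ℕ)) then a i.succ j.succ - l * a 0 i.succ * a 0 j.succ
            else a i.succ j.succ).det
          + (Matrix.of fun i j : Fin m =>
            if Even ((i:ℕ)+(j:ℕ)) then a i.succ j.succ
            else a i.succ j.succ - l * a 0 i.succ * a 0 j.succ).det)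
      = (a 0 0 - 2 * b) * (Matrix.of fun i j : Fin m => a i.succ j.succ).det := by
  set M' : Matrix (Fin m) (Fin m) R := Matrix.of fun i j => a i.succ j.succ with hM'
  set u : Fin m → R := fun i => a 0 i.succ with hu
  -- rewrite B and C as transposes of the star-lemma matrices for M'ᵀ
  have hBt : (Matrix.of fun i j : Fin m =>
        if Even ((i:ℕ)+(j:ℕ)) then a i.succ j.succ - l * a 0 i.succ * a 0 j.succ
        else a i.succ j.succ).det
      = (Matrix.of fun i j : Fin m =>
          M'ᵀ i j - if Even ((i:ℕ)+(j:ℕ)) then l * u i * u j else 0).det := by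
    rw [← Matrix.det_transpose (Matrix.of fun i j : Fin m =>
      M'ᵀ i j - if Even ((i:ℕ)+(j:ℕ)) then l * u i * u j else 0)]
    congr 1
    ext i j
    simp only [Matrix.of_apply, Matrix.transpose_apply, hM', hu]
    rw [Nat.add_comm (j:ℕ) (i:ℕ)]
    by_cases hp : Even ((i:ℕ)+(j:ℕ)) <;> simp [hp] <;> ring
  have hCt : (Matrix.of fun i j : Fin m =>
        if Even ((i:ℕ)+(j:ℕ)) then a i.succ j.succ
        else a i.succ j.succ - l * a 0 i.succ * a 0 j.succ).det
      = (Matrix.of fun i j : Fin m =>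
          M'ᵀ i j - if Even ((i:ℕ)+(j:ℕ)) then 0 else l * u i * u j).det := by
    rw [← Matrix.det_transpose (Matrix.of fun i j : Fin m =>
      M'ᵀ i j - if Even ((i:ℕ)+(j:ℕ)) then 0 else l * u i * u j)]
    congr 1
    ext i j
    simp only [Matrix.of_apply, Matrix.transpose_apply, hM', hu]
    rw [Nat.add_comm (j:ℕ) (i:ℕ)]
    by_cases hp : Even ((i:ℕ)+(j:ℕ)) <;> simp [hp] <;> ring
  have hstar := star_lemma l M'ᵀ u
  have hrow : ∀ i : Fin m, (M'ᵀ.updateRow i u).det = (M'.updateCol i u).det := by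
    intro i
    rw [Matrix.updateRow_transpose, Matrix.det_transpose]
  have hBC : (Matrix.of fun i j : Fin m =>
        if Even ((i:ℕ)+(j:ℕ)) then a i.succ j.succ - l * a 0 i.succ * a 0 j.succ
        else a i.succ j.succ).det
      + (Matrix.of fun i j : Fin m =>
        if Even ((i:ℕ)+(j:ℕ)) then a i.succ j.succ
        else a i.succ j.succ - l * a 0 i.succ * a 0 j.succ).det
      = 2 * M'.det - l * ∑ i : Fin m, u i * (M'.updateCol i u).det := by
    rw [hBt, hCt, hstar, Matrix.det_transpose]
    congr 2
    exact Finset.sum_congr rfl fun i _ => by rw [hrow]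
  rw [hBC, detA l b a ha]
  ring

end Thm3Aux


/-- **Theorem 3 of the paper.**
Let `R` be a commutative ring, `l, b ∈ R`, `n ≥ 1`, and `(a_{i,j})_{1 ≤ i,j ≤ n}` elements of `R`
with `a_{i,1} = b ⬝ a_{1,i}` for `i > 1`.  With the `n×n` matrix `A` and the `(n-1)×(n-1)`
matrices `B`, `C` as in the statement,
`det A - b (det B + det C) = (a_{1,1} - 2b) ⬝ det((a_{i,j})_{2 ≤ i,j ≤ n})`.
(The paper index `i ∈ {1,…,n}` is represented by the element `i - 1` of `Fin n`, so that parity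
conditions `i + j even` are unchanged; the paper index `i ∈ {2,…,n}` of `B`, `C` is represented
by the element `i - 2` of `Fin (n-1)`.) -/
theorem det_identity_theorem3 {R : Type*} [CommRing R] (l b : R) (n : ℕ) (hn : 1 ≤ n)
    (a : Fin n → Fin n → R)
    (ha : ∀ i : Fin n, i ≠ ⟨0, hn⟩ → a i ⟨0, hn⟩ = b * a ⟨0, hn⟩ i) :
    (Matrix.of fun i j : Fin n =>
        if i = ⟨0, hn⟩ ∧ j ≠ ⟨0, hn⟩ then l * a ⟨0, hn⟩ j else a i j).det
      - b * ((Matrix.of fun i j : Fin (n - 1) =>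
            if Even ((i : ℕ) + (j : ℕ)) then
              a ⟨(i : ℕ) + 1, by omega⟩ ⟨(j : ℕ) + 1, by omega⟩
                - l * a ⟨0, hn⟩ ⟨(i : ℕ) + 1, by omega⟩ * a ⟨0, hn⟩ ⟨(j : ℕ) + 1, by omega⟩
            else a ⟨(i : ℕ) + 1, by omega⟩ ⟨(j : ℕ) + 1, by omega⟩).det
          + (Matrix.of fun i j : Fin (n - 1) =>
            if Even ((i : ℕ) + (j : ℕ)) then
              a ⟨(i : ℕ) + 1, by omega⟩ ⟨(j : ℕ) + 1, by omega⟩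
            else
              a ⟨(i : ℕ) + 1, by omega⟩ ⟨(j : ℕ) + 1, by omega⟩
                - l * a ⟨0, hn⟩ ⟨(i : ℕ) + 1, by omega⟩ * a ⟨0, hn⟩ ⟨(j : ℕ) + 1, by omega⟩).det)
      = (a ⟨0, hn⟩ ⟨0, hn⟩ - 2 * b) *
        (Matrix.of fun i j : Fin (n - 1) =>
          a ⟨(i : ℕ) + 1, by omega⟩ ⟨(j : ℕ) + 1, by omega⟩).det := by
  obtain ⟨m, rfl⟩ : ∃ m, n = m + 1 := ⟨n - 1, by omega⟩
  exact Thm3Aux.main_aux l b m a ha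
end
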